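/- Let z ∈ T_L with z ≠ o, let i ∈ {1,…,d}, and let q be a natural number such that z_i + q is even and both z_i − q and z_i + q lie in the open interval (0, L). Then ⟨φ_o^1 φ_z^1⟩_{L,N,β} ≤ (1/2) ⟨φ_o^1 φ_{(z_i − q) e_i}^1⟩_{L,N,β} + (1/2) ⟨φ_o^1 φ_{(z_i + q) e_i}^1⟩_{L,N,β}. -/

import Mathlib

open MeasureTheory Metric
open scoped RealInnerProductSpace BigOperators

/-- Vertices of the torus `(ℤ/Lℤ)^d`. -/
abbrev TorusPt (d L : ℕ) := Fin d → ZMod L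

/-- Nearest-neighbour adjacency on the torus: `x` and `y` differ by `±1 (mod L)`
in exactly one coordinate. -/
def torusAdj {d L : ℕ} (x y : TorusPt d L) : Prop :=
  ∃ j : Fin d, y = Function.update x j (x j + 1) ∨ y = Function.update x j (x j - 1)

instance {d L : ℕ} (x y : TorusPt d L) : Decidable (torusAdj x y) := by
  unfold torusAdj; infer_instance

/-- The unit sphere `S^{N-1} ⊂ ℝ^N`. -/
abbrev SpinSphere (N : ℕ) := sphere (0 : EuclideanSpace ℝ (Fin N)) 1

/-- A spin configuration on the torus. -/
abbrev SpinCfg (d L N : ℕ) := TorusPt d L → SpinSphere N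

/-- The uniform probability measure on the unit sphere `S^{N-1}`. -/
noncomputable def sphereUniform (N : ℕ) : Measure (SpinSphere N) :=
  ((volume : Measure (EuclideanSpace ℝ (Fin N))).toSphere Set.univ)⁻¹ •
    (volume : Measure (EuclideanSpace ℝ (Fin N))).toSphere

/-- The product over vertices of the uniform probability measures on the sphere. -/
noncomputable def spinMeasure (d L N : ℕ) [NeZero L] : Measure (SpinCfg d L N) :=
  Measure.pi fun _ : TorusPt d L => sphereUniform N

/-- The Hamiltonian `H(φ) = -∑_{{x,y} edge} φ_x · φ_y`; every unordered
nearest-neighbour edge appears exactly twice in the double sum below. -/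
noncomputable def hamiltonian {d L N : ℕ} [NeZero L] (φ : SpinCfg d L N) : ℝ :=
  -(1 / 2) * ∑ x : TorusPt d L, ∑ y : TorusPt d L,
    if torusAdj x y then
      ⟪(φ x : EuclideanSpace ℝ (Fin N)), (φ y : EuclideanSpace ℝ (Fin N))⟫
    else 0

/-- The Gibbs expectation `⟨f⟩_{L,N,β}`. -/
noncomputable def gibbsExp (d L N : ℕ) [NeZero L] (β : ℝ) (f : SpinCfg d L N → ℝ) : ℝ :=
  (∫ φ, Real.exp (-β * hamiltonian φ) ∂(spinMeasure d L N))⁻¹ *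
    ∫ φ, f φ * Real.exp (-β * hamiltonian φ) ∂(spinMeasure d L N)

/-- The spin-spin correlation `⟨φ_x ⬝ φ_y⟩_{L,N,β}`. -/
noncomputable def corrDot (d L N : ℕ) [NeZero L] (β : ℝ) (x y : TorusPt d L) : ℝ :=
  gibbsExp d L N β fun φ =>
    ⟪(φ x : EuclideanSpace ℝ (Fin N)), (φ y : EuclideanSpace ℝ (Fin N))⟫

/-- The correlation `⟨φ_x^1 φ_y^1⟩_{L,N,β}` of first components. -/
noncomputable def corrOne (d L N : ℕ) [NeZero L] [NeZero N] (β : ℝ) (x y : TorusPt d L) : ℝ :=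
  gibbsExp d L N β fun φ =>
    (φ x : EuclideanSpace ℝ (Fin N)) 0 * (φ y : EuclideanSpace ℝ (Fin N)) 0

/-- The origin of the torus. -/
def torusOrigin (d L : ℕ) : TorusPt d L := fun _ => 0

/-- The point `n • e_i` on the `i`-th cartesian axis. -/
def axisPt (d L : ℕ) (i : Fin d) (n : ℕ) : TorusPt d L :=
  fun k => if k = i then (n : ZMod L) else 0

/-- The sup torus norm `‖z‖_∞ = max_i min(z_i, L - z_i)`. -/
def tnormInf {d L : ℕ} (z : TorusPt d L) : ℕ :=
  Finset.univ.sup fun i : Fin d => min (z i).val (L - (z i).val)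


/-!
Write `b = (z_i + q) e_i` and `2k = z_i + q`. The reflection `σ : x_i ↦ 2k - x_i` of the torus
fixes the hyperplanes `x_i = k` and `x_i = k + L/2` and swaps the two halves between them; it maps
`b` to `o`, and `z - σ z = (z_i - q) e_i`. Since `L` is even, no bond joins the open halves, so
`H(φ) = H⁺(φ) + H⁺(φ ∘ σ)` where `H⁺` only sees the spins on the closed half containing `z` and `b`.
Conditionally on the spins on the hyperplanes, the spins on the two open halves are independent
and exchanged by `σ`, so `⟨F · G ∘ σ⟩` is, up to normalisation, `∫ f g` over the hyperplane spins,
with `f, g` the partial integrals of `F, G`. Hence `2 f g ≤ f² + g²` gives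
`⟨φ_z^1 φ_{σb}^1⟩ ≤ ½ ⟨φ_z^1 φ_{σz}^1⟩ + ½ ⟨φ_b^1 φ_{σb}^1⟩`, and translation invariance turns
this into the claim.
-/

lemma integrable_of_norm_le {α : Type*} [MeasurableSpace α] {μ : Measure α} [IsFiniteMeasure μ]
    {f : α → ℝ} (hf : Measurable f) (hb : ∃ C, ∀ x, ‖f x‖ ≤ C) : Integrable f μ :=
  let ⟨C, hC⟩ := hb
  .of_bound hf.aestronglyMeasurable C (.of_forall hC)

lemma exists_norm_mul_le {α : Type*} {f g : α → ℝ} (hf : ∃ C, ∀ x, ‖f x‖ ≤ C)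
    (hg : ∃ C, ∀ x, ‖g x‖ ≤ C) : ∃ C, ∀ x, ‖f x * g x‖ ≤ C :=
  let ⟨C, hC⟩ := hf
  let ⟨D, hD⟩ := hg
  ⟨C * D, fun x => norm_mul_le_of_le (hC x) (hD x)⟩

lemma exists_norm_integral_le {Z Y : Type*} [MeasurableSpace Y] {ν : Measure Y}
    [IsProbabilityMeasure ν] {U : Z × Y → ℝ} (hU : ∃ C, ∀ w, ‖U w‖ ≤ C) :
    ∃ C, ∀ η, ‖∫ α, U (η, α) ∂ν‖ ≤ C :=
  let ⟨C, hC⟩ := hU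
  ⟨C, fun η => by
    simpa using norm_integral_le_of_norm_le_const (μ := ν) (.of_forall fun α => hC (η, α))⟩

section TwoCopies

variable {Z Y : Type*} [MeasurableSpace Z] [MeasurableSpace Y] {ρ : Measure Z} {ν : Measure Y}
  [IsFiniteMeasure ρ] [IsProbabilityMeasure ν] {U V : Z × Y → ℝ}

lemma integral_mul_prod_prod (hU : Measurable U) (hV : Measurable V)
    (hUb : ∃ C, ∀ w, ‖U w‖ ≤ C) (hVb : ∃ C, ∀ w, ‖V w‖ ≤ C) :
    ∫ w, U (w.1, w.2.1) * V (w.1, w.2.2) ∂ρ.prod (ν.prod ν) =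
      ∫ η, (∫ α, U (η, α) ∂ν) * (∫ α, V (η, α) ∂ν) ∂ρ := by
  have hint : Integrable (fun w : Z × Y × Y => U (w.1, w.2.1) * V (w.1, w.2.2))
      (ρ.prod (ν.prod ν)) :=
    integrable_of_norm_le (by fun_prop)
      (exists_norm_mul_le (hUb.imp fun _ hC _ => hC _) (hVb.imp fun _ hC _ => hC _))
  rw [integral_prod _ hint]
  exact integral_congr_ae (.of_forall fun η =>
    integral_prod_mul (fun α => U (η, α)) (fun γ => V (η, γ)))

lemma integral_mul_prod_prod_le (hU : Measurable U) (hV : Measurable V)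
    (hUb : ∃ C, ∀ w, ‖U w‖ ≤ C) (hVb : ∃ C, ∀ w, ‖V w‖ ≤ C) :
    ∫ w, U (w.1, w.2.1) * V (w.1, w.2.2) ∂ρ.prod (ν.prod ν) ≤
      1 / 2 * ∫ w, U (w.1, w.2.1) * U (w.1, w.2.2) ∂ρ.prod (ν.prod ν) +
        1 / 2 * ∫ w, V (w.1, w.2.1) * V (w.1, w.2.2) ∂ρ.prod (ν.prod ν) := by
  rw [integral_mul_prod_prod hU hV hUb hVb, integral_mul_prod_prod hU hU hUb hUb,
    integral_mul_prod_prod hV hV hVb hVb]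
  set f := fun η => ∫ α, U (η, α) ∂ν
  set g := fun η => ∫ α, V (η, α) ∂ν
  have hf : Measurable f := hU.stronglyMeasurable.integral_prod_right'.measurable
  have hg : Measurable g := hV.stronglyMeasurable.integral_prod_right'.measurable
  have hfb := exists_norm_integral_le (ν := ν) hUb
  have hgb := exists_norm_integral_le (ν := ν) hVb
  have hfg : Integrable (fun η => f η * g η) ρ :=
    integrable_of_norm_le (hf.mul hg) (exists_norm_mul_le hfb hgb)
  have hff : Integrable (fun η => f η * f η) ρ :=
    integrable_of_norm_le (hf.mul hf) (exists_norm_mul_le hfb hfb)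
  have hgg : Integrable (fun η => g η * g η) ρ :=
    integrable_of_norm_le (hg.mul hg) (exists_norm_mul_le hgb hgb)
  rw [← integral_const_mul, ← integral_const_mul,
    ← integral_add (hff.const_mul _) (hgg.const_mul _)]
  exact integral_mono hfg ((hff.const_mul _).add (hgg.const_mul _)) fun η => by
    nlinarith [sq_nonneg (f η - g η)]

end TwoCopies

section Reflection

variable {ι : Type*}

/-- `σ` reflects `ι` in the plane `P`: it fixes `P` and exchanges the open half `A \ P` with
the complement of the closed half `A`. -/
structure IsReflection (σ : ι → ι) (P A : Set ι) : Prop where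
  involutive : Function.Involutive σ
  eq_self_of_mem_plane : ∀ x ∈ P, σ x = x
  plane_subset : P ⊆ A
  notMem_of_mem_diff : ∀ x ∈ A, x ∉ P → σ x ∉ A
  mem_of_notMem : ∀ x ∉ A, σ x ∈ A

namespace IsReflection

variable {σ : ι → ι} {P A : Set ι}

lemma mem_plane_iff (hσ : IsReflection σ P A) {x : ι} : σ x ∈ P ↔ x ∈ P :=
  ⟨fun h => (hσ.involutive x).symm.trans (hσ.eq_self_of_mem_plane _ h) ▸ h,
    fun h => (hσ.eq_self_of_mem_plane x h).symm ▸ h⟩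

open Classical in
/-- The sites of `ι` as the plane and two copies of the open half, the second one placed
on the far side by `σ`. -/
noncomputable def indexEquiv (hσ : IsReflection σ P A) : P ⊕ (↥(A \ P) ⊕ ↥(A \ P)) ≃ ι where
  toFun := Sum.elim (↑) (Sum.elim (↑) (σ ·))
  invFun x :=
    if hP : x ∈ P then .inl ⟨x, hP⟩
    else if hA : x ∈ A then .inr (.inl ⟨x, hA, hP⟩)
    else .inr (.inr ⟨σ x, hσ.mem_of_notMem x hA,
      fun h => hA (hσ.plane_subset (hσ.mem_plane_iff.1 h))⟩)
  left_inv := by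
    rintro (⟨x, hx⟩ | ⟨x, hxA, hxP⟩ | ⟨x, hxA, hxP⟩)
    · simp [hx]
    · simp [hxA, hxP]
    · have hA := hσ.notMem_of_mem_diff x hxA hxP
      have hP : σ x ∉ P := fun h => hA (hσ.plane_subset h)
      simp [hA, hP, hσ.involutive x]
  right_inv x := by
    by_cases hP : x ∈ P
    · simp [hP]
    by_cases hA : x ∈ A
    · simp [hP, hA]
    · simp [hP, hA, hσ.involutive x]

variable {X : Type*} [MeasurableSpace X]

noncomputable def splitEquiv (hσ : IsReflection σ P A) :
    (ι → X) ≃ᵐ (P → X) × ((↥(A \ P) → X) × (↥(A \ P) → X)) :=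
  (MeasurableEquiv.piCongrLeft (fun _ => X) hσ.indexEquiv).symm.trans <|
    (MeasurableEquiv.sumPiEquivProdPi _).trans <|
      (MeasurableEquiv.refl _).prodCongr (MeasurableEquiv.sumPiEquivProdPi _)

lemma splitEquiv_apply (hσ : IsReflection σ P A) (φ : ι → X) :
    hσ.splitEquiv φ =
      (fun x : P => φ x, fun x : ↥(A \ P) => φ x, fun x : ↥(A \ P) => φ (σ x)) := rfl

lemma splitEquiv_symm_apply_of_mem_plane (hσ : IsReflection σ P A)
    (w : (P → X) × ((↥(A \ P) → X) × (↥(A \ P) → X))) {x : ι} (hx : x ∈ P) :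
    hσ.splitEquiv.symm w x = w.1 ⟨x, hx⟩ := by
  obtain ⟨φ, rfl⟩ := hσ.splitEquiv.surjective w
  rw [MeasurableEquiv.symm_apply_apply, splitEquiv_apply]

lemma splitEquiv_symm_apply_of_mem_diff (hσ : IsReflection σ P A)
    (w : (P → X) × ((↥(A \ P) → X) × (↥(A \ P) → X))) {x : ι} (hx : x ∈ A \ P) :
    hσ.splitEquiv.symm w x = w.2.1 ⟨x, hx⟩ := by
  obtain ⟨φ, rfl⟩ := hσ.splitEquiv.surjective w
  rw [MeasurableEquiv.symm_apply_apply, splitEquiv_apply]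

lemma apply_eq_of_dependsOn (hσ : IsReflection σ P A) {u : (ι → X) → ℝ}
    (hu : DependsOn u A) (φ : ι → X) (γ : ↥(A \ P) → X) :
    u φ = u (hσ.splitEquiv.symm ((hσ.splitEquiv φ).1, (hσ.splitEquiv φ).2.1, γ)) :=
  hu fun x hx => by
    by_cases hP : x ∈ P
    · rw [splitEquiv_symm_apply_of_mem_plane _ _ hP, splitEquiv_apply]
    · rw [splitEquiv_symm_apply_of_mem_diff _ _ ⟨hx, hP⟩, splitEquiv_apply]

lemma apply_comp_eq_of_dependsOn (hσ : IsReflection σ P A) {u : (ι → X) → ℝ}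
    (hu : DependsOn u A) (φ : ι → X) (γ : ↥(A \ P) → X) :
    u (φ ∘ σ) = u (hσ.splitEquiv.symm ((hσ.splitEquiv φ).1, (hσ.splitEquiv φ).2.2, γ)) :=
  hu fun x hx => by
    by_cases hP : x ∈ P
    · rw [splitEquiv_symm_apply_of_mem_plane _ _ hP, splitEquiv_apply, Function.comp_apply,
        hσ.eq_self_of_mem_plane x hP]
    · rw [splitEquiv_symm_apply_of_mem_diff _ _ ⟨hx, hP⟩, splitEquiv_apply, Function.comp_apply]

variable [Fintype ι] (m : Measure X) [IsProbabilityMeasure m]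

lemma measurePreserving_splitEquiv [DecidablePred (· ∈ P)] [DecidablePred (· ∈ A)]
    (hσ : IsReflection σ P A) :
    MeasurePreserving hσ.splitEquiv (Measure.pi fun _ : ι => m)
      ((Measure.pi fun _ : P => m).prod
        ((Measure.pi fun _ : ↥(A \ P) => m).prod (Measure.pi fun _ : ↥(A \ P) => m))) :=
  (measurePreserving_piCongrLeft (fun _ => m) hσ.indexEquiv).symm _ |>.trans <|
    (measurePreserving_sumPiEquivProdPi _).trans <|
      (MeasurePreserving.id _).prod (measurePreserving_sumPiEquivProdPi _)

lemma integral_mul_comp_eq [DecidablePred (· ∈ P)] [DecidablePred (· ∈ A)]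
    (hσ : IsReflection σ P A) {u v : (ι → X) → ℝ} (hu : DependsOn u A) (hv : DependsOn v A) :
    ∫ φ, u φ * v (φ ∘ σ) ∂Measure.pi (fun _ : ι => m) =
      ∫ w, u (hσ.splitEquiv.symm (w.1, w.2.1, w.2.1)) *
          v (hσ.splitEquiv.symm (w.1, w.2.2, w.2.2))
        ∂(Measure.pi fun _ : P => m).prod
          ((Measure.pi fun _ : ↥(A \ P) => m).prod (Measure.pi fun _ : ↥(A \ P) => m)) := by
  rw [← (measurePreserving_splitEquiv m hσ).integral_comp']
  refine integral_congr_ae (.of_forall fun φ => ?_)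
  exact congrArg₂ (· * ·) (hσ.apply_eq_of_dependsOn hu φ _)
    (hσ.apply_comp_eq_of_dependsOn hv φ _)

/-- Reflection positivity of a product measure. -/
theorem integral_mul_comp_le (hσ : IsReflection σ P A) {u v : (ι → X) → ℝ}
    (hu : Measurable u) (hv : Measurable v) (hub : ∃ C, ∀ φ, ‖u φ‖ ≤ C)
    (hvb : ∃ C, ∀ φ, ‖v φ‖ ≤ C) (huA : DependsOn u A) (hvA : DependsOn v A) :
    ∫ φ, u φ * v (φ ∘ σ) ∂Measure.pi (fun _ : ι => m) ≤
      1 / 2 * ∫ φ, u φ * u (φ ∘ σ) ∂Measure.pi (fun _ : ι => m) +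
        1 / 2 * ∫ φ, v φ * v (φ ∘ σ) ∂Measure.pi (fun _ : ι => m) := by
  classical
  rw [integral_mul_comp_eq m hσ huA hvA, integral_mul_comp_eq m hσ huA huA,
    integral_mul_comp_eq m hσ hvA hvA]
  have hext : Measurable fun w : (P → X) × (↥(A \ P) → X) =>
      hσ.splitEquiv.symm (w.1, w.2, w.2) :=
    hσ.splitEquiv.symm.measurable.comp (by fun_prop)
  exact integral_mul_prod_prod_le (hu.comp hext) (hv.comp hext)
    (hub.imp fun _ hC _ => hC _) (hvb.imp fun _ hC _ => hC _)

end IsReflection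

open Classical in
/-- The coupling of the half-space Hamiltonian `H⁺`, chosen so that
`H(φ) = H⁺(φ) + H⁺(φ ∘ σ)`. -/
noncomputable def halfCoupling (P A : Set ι) (x y : ι) : ℝ :=
  if x ∈ A ∧ y ∈ A then if x ∈ P ∧ y ∈ P then 1 / 2 else 1 else 0

lemma mem_of_halfCoupling_ne_zero {P A : Set ι} {x y : ι} (h : halfCoupling P A x y ≠ 0) :
    x ∈ A ∧ y ∈ A := by
  by_contra hxy
  exact h (if_neg hxy)

lemma IsReflection.halfCoupling_add {σ : ι → ι} {P A : Set ι} (hσ : IsReflection σ P A)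
    {x y : ι} (hxy : x ∈ A → x ∉ P → y ∈ A) (hyx : y ∈ A → y ∉ P → x ∈ A) :
    halfCoupling P A x y + halfCoupling P A (σ x) (σ y) = 1 := by
  have hPx := hσ.mem_plane_iff (x := x)
  have hPy := hσ.mem_plane_iff (x := y)
  have hPA : ∀ z, z ∈ P → z ∈ A := fun z h => hσ.plane_subset h
  have hout := hσ.notMem_of_mem_diff
  have hin := hσ.mem_of_notMem
  unfold halfCoupling
  split_ifs <;> grind

end Reflection

section TorusGeometry

variable {d L : ℕ}

lemma Function.update_eq_add_single {ι G : Type*} [DecidableEq ι] [AddCommGroup G] (x : ι → G)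
    (j : ι) (v : G) : Function.update x j v = x + Pi.single j (v - x j) := by
  ext k
  rcases eq_or_ne k j with rfl | hk <;> simp [*]

lemma torusAdj_iff_sub {x y : TorusPt d L} :
    torusAdj x y ↔ ∃ j, y - x = Pi.single j 1 ∨ y - x = -Pi.single j 1 := by
  simp only [torusAdj, Function.update_eq_add_single, add_sub_cancel_left, sub_sub_cancel_left,
    Pi.single_neg, ← sub_eq_iff_eq_add']

lemma torusAdj_comm {x y : TorusPt d L} : torusAdj x y ↔ torusAdj y x := by
  simp only [torusAdj_iff_sub, ← neg_sub x y, neg_eq_iff_eq_neg, neg_neg]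
  exact exists_congr fun _ => or_comm

lemma torusAdj_add_right (t : TorusPt d L) {x y : TorusPt d L} :
    torusAdj (x + t) (y + t) ↔ torusAdj x y := by
  simp only [torusAdj_iff_sub, add_sub_add_right_eq_sub]

def torusRefl (i : Fin d) (c : ZMod L) (x : TorusPt d L) : TorusPt d L :=
  Function.update x i (c - x i)

lemma torusRefl_involutive (i : Fin d) (c : ZMod L) : Function.Involutive (torusRefl i c) := by
  intro x
  simp [torusRefl]

lemma torusRefl_sub_torusRefl (i : Fin d) (c : ZMod L) (x y : TorusPt d L) :
    torusRefl i c y - torusRefl i c x = Function.update (y - x) i (-(y - x) i) := by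
  ext k
  rcases eq_or_ne k i with rfl | hk
  · simp [torusRefl]
  · simp [torusRefl, hk]

lemma torusAdj_torusRefl (i : Fin d) (c : ZMod L) {x y : TorusPt d L} (h : torusAdj x y) :
    torusAdj (torusRefl i c x) (torusRefl i c y) := by
  rw [torusAdj_iff_sub] at h ⊢
  obtain ⟨j, h⟩ := h
  refine ⟨j, ?_⟩
  rw [torusRefl_sub_torusRefl]
  rcases eq_or_ne j i with rfl | hj
  · rcases h with h | h <;> rw [h] <;> [right; left] <;> ext k <;>
      rcases eq_or_ne k j with rfl | hk <;> simp [*]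
  · rcases h with h | h <;> rw [h] <;> [left; right] <;> ext k <;>
      rcases eq_or_ne k i with rfl | hk <;> simp [*, hj.symm]

lemma torusAdj_torusRefl_iff (i : Fin d) (c : ZMod L) {x y : TorusPt d L} :
    torusAdj (torusRefl i c x) (torusRefl i c y) ↔ torusAdj x y :=
  ⟨fun h => by simpa [torusRefl_involutive i c _] using torusAdj_torusRefl i c h,
    torusAdj_torusRefl i c⟩

lemma torusRefl_apply_sub (i : Fin d) (k : ZMod L) (x : TorusPt d L) :
    torusRefl i (2 * k) x i - k = -(x i - k) := by
  simp only [torusRefl, Function.update_self]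
  ring

/-- The hyperplanes `x_i = k` and `x_i = k + L/2`. -/
def torusPlane (i : Fin d) (k : ZMod L) : Set (TorusPt d L) := {x | 2 * (x i - k) = 0}

variable [NeZero L]

/-- The closed half `k ≤ x_i ≤ k + L/2` of the torus. -/
def torusHalf (i : Fin d) (k : ZMod L) : Set (TorusPt d L) := {x | 2 * (x i - k).val ≤ L}

lemma ZMod.two_mul_eq_zero_iff_val (u : ZMod L) : 2 * u = 0 ↔ u.val = 0 ∨ 2 * u.val = L := by
  have hu := u.val_lt
  rw [two_mul, ← ZMod.val_eq_zero, ZMod.val_add]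
  rcases lt_or_ge (u.val + u.val) L with h | h
  · rw [Nat.mod_eq_of_lt h]
    omega
  · rw [Nat.mod_eq_sub_mod h, Nat.mod_eq_of_lt (by omega)]
    omega

lemma isReflection_torusRefl (i : Fin d) (k : ZMod L) :
    IsReflection (torusRefl i (2 * k)) (torusPlane i k) (torusHalf i k) where
  involutive := torusRefl_involutive i _
  eq_self_of_mem_plane x hx := by
    have hx : 2 * (x i - k) = 0 := hx
    rw [torusRefl, Function.update_eq_self_iff]
    linear_combination -hx
  plane_subset x hx := by
    have := (ZMod.two_mul_eq_zero_iff_val _).1 hx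
    simp only [torusHalf, Set.mem_ofPred_eq]
    omega
  notMem_of_mem_diff x hA hP := by
    simp only [torusHalf, torusPlane, Set.mem_ofPred_eq, ZMod.two_mul_eq_zero_iff_val] at hA hP ⊢
    rw [torusRefl_apply_sub, ZMod.neg_val, if_neg (by rw [← ZMod.val_eq_zero]; omega)]
    omega
  mem_of_notMem x hA := by
    simp only [torusHalf, Set.mem_ofPred_eq] at hA ⊢
    rw [torusRefl_apply_sub, ZMod.neg_val]
    split_ifs <;> omega

lemma mem_torusHalf_of_torusAdj (hL : Even L) {i : Fin d} {k : ZMod L} {x y : TorusPt d L}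
    (hxy : torusAdj x y) (hA : x ∈ torusHalf i k) (hP : x ∉ torusPlane i k) :
    y ∈ torusHalf i k := by
  simp only [torusHalf, torusPlane, Set.mem_ofPred_eq, ZMod.two_mul_eq_zero_iff_val] at hA hP ⊢
  have hstep : y i - k = x i - k ∨ y i - k = x i - k + 1 ∨ y i - k = x i - k - 1 := by
    obtain ⟨j, h⟩ := torusAdj_iff_sub.1 hxy
    have hy : y i - k = x i - k + (y - x) i := by rw [Pi.sub_apply]; ring
    rcases eq_or_ne j i with rfl | hj <;> rcases h with h | h <;> rw [hy, h] <;>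
      simp [sub_eq_add_neg, *]
  obtain ⟨r, hr⟩ := hL
  have h1 := ZMod.val_one_eq_one_mod L
  have h1' := Nat.mod_le 1 L
  rcases hstep with h | h | h <;> rw [h]
  · omega
  · have := ZMod.val_add_le (x i - k) 1
    omega
  · rw [ZMod.val_sub (by omega)]
    omega

end TorusGeometry

section BondEnergy

variable {d L N : ℕ} [NeZero L]

noncomputable def bondEnergy (J : TorusPt d L → TorusPt d L → ℝ) (φ : SpinCfg d L N) : ℝ :=
  -(1 / 2) * ∑ x, ∑ y, if torusAdj x y then
    J x y * ⟪(φ x : EuclideanSpace ℝ (Fin N)), (φ y : EuclideanSpace ℝ (Fin N))⟫ else 0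

lemma bondEnergy_add_eq_hamiltonian {J J' : TorusPt d L → TorusPt d L → ℝ}
    (h : ∀ x y, torusAdj x y → J x y + J' x y = 1) (φ : SpinCfg d L N) :
    bondEnergy J φ + bondEnergy J' φ = hamiltonian φ := by
  simp only [bondEnergy, hamiltonian, ← mul_add, ← Finset.sum_add_distrib]
  congr! 3 with x _ y _
  split_ifs with hxy
  · rw [← add_mul, h x y hxy, one_mul]
  · rw [add_zero]

lemma hamiltonian_eq_bondEnergy (φ : SpinCfg d L N) :
    hamiltonian φ = bondEnergy (fun _ _ => 1) φ := by
  simp [hamiltonian, bondEnergy]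

lemma bondEnergy_comp (T : Equiv.Perm (TorusPt d L))
    (hT : ∀ x y, torusAdj (T x) (T y) ↔ torusAdj x y) (J : TorusPt d L → TorusPt d L → ℝ)
    (φ : SpinCfg d L N) :
    bondEnergy J (φ ∘ T) = bondEnergy (fun x y => J (T.symm x) (T.symm y)) φ := by
  unfold bondEnergy
  congr 1
  symm
  rw [← Equiv.sum_comp T]
  refine Finset.sum_congr rfl fun x _ => ?_
  rw [← Equiv.sum_comp T]
  simp [hT]

lemma hamiltonian_comp (T : Equiv.Perm (TorusPt d L))
    (hT : ∀ x y, torusAdj (T x) (T y) ↔ torusAdj x y) (φ : SpinCfg d L N) :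
    hamiltonian (φ ∘ T) = hamiltonian φ := by
  rw [hamiltonian_eq_bondEnergy, bondEnergy_comp T hT, hamiltonian_eq_bondEnergy]

lemma continuous_bondEnergy (J : TorusPt d L → TorusPt d L → ℝ) :
    Continuous (bondEnergy (N := N) J) := by
  unfold bondEnergy
  refine continuous_const.mul <| continuous_finsetSum _ fun x _ =>
    continuous_finsetSum _ fun y _ => ?_
  split_ifs
  · fun_prop
  · exact continuous_const

lemma dependsOn_bondEnergy {J : TorusPt d L → TorusPt d L → ℝ} {A : Set (TorusPt d L)}
    (hJ : ∀ x y, J x y ≠ 0 → x ∈ A ∧ y ∈ A) :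
    DependsOn (bondEnergy (N := N) J) A := by
  intro φ ψ h
  unfold bondEnergy
  congr! 3 with x _ y _
  by_cases hJxy : J x y = 0
  · simp [hJxy]
  · rw [h x (hJ x y hJxy).1, h y (hJ x y hJxy).2]

end BondEnergy

section Gibbs

variable {d L N : ℕ} [NeZero L] [NeZero N]

instance sphereUniform.isProbabilityMeasure : IsProbabilityMeasure (sphereUniform N) := by
  constructor
  rw [sphereUniform, Measure.smul_apply, smul_eq_mul, Measure.toSphere_apply_univ]
  refine ENNReal.inv_mul_cancel ?_ ?_
  · refine mul_ne_zero ?_ (measure_ball_pos _ _ one_pos).ne'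
    simp [NeZero.ne N]
  · exact ENNReal.mul_ne_top (ENNReal.natCast_ne_top _) measure_ball_lt_top.ne

lemma integral_comp_perm (T : Equiv.Perm (TorusPt d L)) (f : SpinCfg d L N → ℝ) :
    ∫ φ, f (φ ∘ T) ∂spinMeasure d L N = ∫ φ, f φ ∂spinMeasure d L N :=
  ((measurePreserving_piCongrLeft (fun _ => sphereUniform N) T).symm _).integral_comp' f

lemma corrOne_comp (β : ℝ) (T : Equiv.Perm (TorusPt d L))
    (hT : ∀ x y, torusAdj (T x) (T y) ↔ torusAdj x y) (x y : TorusPt d L) :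
    corrOne d L N β (T x) (T y) = corrOne d L N β x y := by
  have h := integral_comp_perm T fun φ : SpinCfg d L N =>
    (φ x : EuclideanSpace ℝ (Fin N)) 0 * (φ y : EuclideanSpace ℝ (Fin N)) 0 *
      Real.exp (-β * hamiltonian φ)
  simp only [hamiltonian_comp T hT, Function.comp_apply] at h
  unfold corrOne gibbsExp
  rw [h]

lemma corrOne_add_right (β : ℝ) (t x y : TorusPt d L) :
    corrOne d L N β (x + t) (y + t) = corrOne d L N β x y :=
  corrOne_comp β (Equiv.addRight t) (fun _ _ => torusAdj_add_right t) x y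

lemma corrOne_comm (β : ℝ) (x y : TorusPt d L) :
    corrOne d L N β x y = corrOne d L N β y x := by
  simp only [corrOne, mul_comm]

/-- Reflection positivity of the Gibbs state. -/
theorem corrOne_reflection_le {σ : TorusPt d L → TorusPt d L} {P A : Set (TorusPt d L)}
    (hσ : IsReflection σ P A) (hσadj : ∀ x y, torusAdj (σ x) (σ y) ↔ torusAdj x y)
    (hcut : ∀ x y, torusAdj x y → x ∈ A → x ∉ P → y ∈ A) (β : ℝ) {x y : TorusPt d L}
    (hx : x ∈ A) (hy : y ∈ A) :
    corrOne d L N β x (σ y) ≤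
      1 / 2 * corrOne d L N β x (σ x) + 1 / 2 * corrOne d L N β y (σ y) := by
  have hsplit (φ : SpinCfg d L N) : Real.exp (-β * hamiltonian φ) =
      Real.exp (-β * bondEnergy (halfCoupling P A) φ) *
        Real.exp (-β * bondEnergy (halfCoupling P A) (φ ∘ σ)) := by
    have hrefl := bondEnergy_comp (hσ.involutive.toPerm σ) hσadj (halfCoupling P A) φ
    simp only [Function.Involutive.coe_toPerm, Function.Involutive.toPerm_symm] at hrefl
    rw [← Real.exp_add, hrefl, ← bondEnergy_add_eq_hamiltonian fun a b hab =>
      hσ.halfCoupling_add (hcut a b hab) (hcut b a (torusAdj_comm.1 hab))]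
    congr 1
    ring
  set u : TorusPt d L → SpinCfg d L N → ℝ := fun s φ =>
    (φ s : EuclideanSpace ℝ (Fin N)) 0 * Real.exp (-β * bondEnergy (halfCoupling P A) φ)
  have hcorr (s t : TorusPt d L) : corrOne d L N β s (σ t) =
      (∫ φ, Real.exp (-β * hamiltonian φ) ∂spinMeasure d L N)⁻¹ *
        ∫ φ, u s φ * u t (φ ∘ σ) ∂spinMeasure d L N := by
    unfold corrOne gibbsExp
    congr 1
    refine integral_congr_ae (.of_forall fun φ => ?_)
    simp only [u, hsplit, Function.comp_apply]
    ring
  have hu (s : TorusPt d L) : Continuous (u s) := by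
    have := continuous_bondEnergy (N := N) (halfCoupling P A)
    fun_prop
  have hub (s : TorusPt d L) : ∃ C, ∀ φ, ‖u s φ‖ ≤ C :=
    let ⟨C, hC⟩ := isCompact_univ.exists_bound_of_continuousOn (hu s).continuousOn
    ⟨C, fun φ => hC φ (Set.mem_univ φ)⟩
  have huA {s : TorusPt d L} (hs : s ∈ A) : DependsOn (u s) A := fun φ ψ h => by
    simp only [u]
    rw [h s hs, dependsOn_bondEnergy (fun _ _ => mem_of_halfCoupling_ne_zero) h]
  rw [hcorr, hcorr, hcorr]
  unfold spinMeasure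
  refine (mul_le_mul_of_nonneg_left (hσ.integral_mul_comp_le (sphereUniform N) (hu x).measurable
    (hu y).measurable (hub x) (hub y) (huA hx) (huA hy))
    (inv_nonneg.2 (integral_nonneg fun _ => (Real.exp_pos _).le))).trans_eq ?_
  ring

end Gibbs

section Axis

variable {d L : ℕ}

lemma torusOrigin_eq_zero : torusOrigin d L = 0 := rfl

lemma axisPt_eq_single (i : Fin d) (n : ℕ) : axisPt d L i n = Pi.single i (n : ZMod L) := by
  ext k
  simp [axisPt, Pi.single_apply]

lemma torusRefl_axisPt_self (i : Fin d) (n : ℕ) :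
    torusRefl i (n : ZMod L) (axisPt d L i n) = torusOrigin d L := by
  ext k
  rcases eq_or_ne k i with rfl | hk <;> simp [torusRefl, axisPt, torusOrigin, *]

lemma sub_torusRefl (i : Fin d) (c : ZMod L) (x : TorusPt d L) :
    x - torusRefl i c x = Pi.single i (2 * x i - c) := by
  ext k
  rcases eq_or_ne k i with rfl | hk
  · simp [torusRefl]
    ring
  · simp [torusRefl, hk]

lemma mem_torusHalf_of_sub_eq [NeZero L] {i : Fin d} {k : ZMod L} {x : TorusPt d L} {n : ℕ}
    (hx : x i - k = n) (hn : 2 * n ≤ L) : x ∈ torusHalf i k := by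
  have := NeZero.ne L
  show 2 * (x i - k).val ≤ L
  rwa [hx, ZMod.val_cast_of_lt (by omega)]

end Axis

theorem spin_two_point_even_axis_bound_general
    (d L N : ℕ) [NeZero L] [NeZero N] (hL : Even L)
    (β : ℝ) (z : TorusPt d L) (i : Fin d)
    (q : ℕ) (hpar : Even ((z i).val + q))
    (hlow : q < (z i).val) (hhigh : (z i).val + q < L) :
    corrOne d L N β (torusOrigin d L) z ≤
      (1 / 2) * corrOne d L N β (torusOrigin d L) (axisPt d L i ((z i).val - q)) +
        (1 / 2) * corrOne d L N β (torusOrigin d L) (axisPt d L i ((z i).val + q)) := by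
  obtain ⟨k, hk⟩ := hpar
  have hzi : ((z i).val : ZMod L) = z i := ZMod.natCast_zmod_val _
  have hc : 2 * (k : ZMod L) = ((z i).val + q : ℕ) := by rw [hk]; push_cast; ring
  set σ := torusRefl i (2 * (k : ZMod L))
  set b := axisPt d L i ((z i).val + q)
  have hσb : σ b = torusOrigin d L := by simp only [σ, hc]; exact torusRefl_axisPt_self i _
  have hσz : z - σ z = axisPt d L i ((z i).val - q) := by
    rw [sub_torusRefl, axisPt_eq_single, hc, Nat.cast_sub hlow.le, Nat.cast_add, hzi]
    congr 1
    ring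
  have hz : z ∈ torusHalf i (k : ZMod L) :=
    mem_torusHalf_of_sub_eq (n := (z i).val - k) (by rw [Nat.cast_sub (by omega), hzi]) (by omega)
  have hb : b ∈ torusHalf i (k : ZMod L) :=
    mem_torusHalf_of_sub_eq (n := k) (by simp [b, axisPt, hk]) (by omega)
  calc corrOne d L N β (torusOrigin d L) z = corrOne d L N β z (σ b) := by
        rw [hσb, corrOne_comm]
    _ ≤ 1 / 2 * corrOne d L N β z (σ z) + 1 / 2 * corrOne d L N β b (σ b) :=
        corrOne_reflection_le (isReflection_torusRefl i _) (fun _ _ => torusAdj_torusRefl_iff i _)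
          (fun _ _ hxy => mem_torusHalf_of_torusAdj hL hxy) β hz hb
    _ = _ := by
        rw [← corrOne_add_right β (-σ z) z, ← sub_eq_add_neg, hσz, add_neg_cancel, hσb,
          corrOne_comm β b, corrOne_comm β (axisPt d L i _), torusOrigin_eq_zero]

/-- **Even-distance convexity bound for the spin O(N) two-point function.**
If `z ≠ o`, `z_i + q` is even and `z_i - q, z_i + q ∈ (0, L)`, then
`⟨φ_o^1 φ_z^1⟩ ≤ (1/2)⟨φ_o^1 φ_{(z_i-q)e_i}^1⟩ + (1/2)⟨φ_o^1 φ_{(z_i+q)e_i}^1⟩`. -/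
theorem spin_two_point_even_axis_bound
    (d L N : ℕ) [NeZero L] [NeZero N] (hd : 2 ≤ d) (hL : Even L)
    (β : ℝ) (hβ : 0 ≤ β) (z : TorusPt d L) (hz : z ≠ torusOrigin d L) (i : Fin d)
    (q : ℕ) (hpar : Even ((z i).val + q))
    (hlow : q < (z i).val) (hhigh : (z i).val + q < L) :
    corrOne d L N β (torusOrigin d L) z ≤
      (1 / 2) * corrOne d L N β (torusOrigin d L) (axisPt d L i ((z i).val - q)) +
        (1 / 2) * corrOne d L N β (torusOrigin d L) (axisPt d L i ((z i).val + q)) :=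
  spin_two_point_even_axis_bound_general d L N hL β z i q hpar hlow hhigh
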